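/- arXiv:1005.3838 — 7 statements merged into one kernel-verified Lean document; each statement's English description precedes it below -/
import Mathlib

section
/- Let ρ : V^{⊕m} → M_n(ℂ) be a surjective linear map (V = ℂ^n, identifying V^{⊕n} with n×n matrices), and let D_ρ = ρ^{-1}({det = 0}). Then a vector a ∈ V^{⊕m} satisfies a + v ∈ D_ρ for all v ∈ D_ρ if and only if ρ(a) = 0. -/
/-!
If `ρ a ≠ 0`, some row of `ρ a` is nonzero and can be completed to an invertible matrix `M`.
Then `X = M - ρ a` is singular (that row vanishes), while `ρ a + X = M` is not; surjectivity of
`ρ` lifts `X` to some `v ∈ D_ρ` with `a + v ∉ D_ρ`.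
-/

namespace Matrix

variable {n R : Type*} [Fintype n] [DecidableEq n] [CommRing R]

theorem det_one_updateRow (i : n) (r : n → R) : ((1 : Matrix n n R).updateRow i r).det = r i := by
  rw [← cramer_transpose_apply, transpose_one, cramer_one, Module.End.one_apply]

theorem exists_det_ne_zero_and_row_eq {r : n → R} (hr : r ≠ 0) (i : n) :
    ∃ M : Matrix n n R, M.det ≠ 0 ∧ M i = r := by
  obtain ⟨j, hj⟩ := Function.ne_iff.mp hr
  -- `r ∘ σ` carries the nonzero entry `r j` in position `i`, where `det_one_updateRow` reads it off
  set σ : Equiv.Perm n := Equiv.swap i j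
  refine ⟨((1 : Matrix n n R).updateRow i (r ∘ σ)).submatrix id σ, ?_, ?_⟩
  · have hsign : IsUnit ((Equiv.Perm.sign σ : ℤ) : R) :=
      (Equiv.Perm.sign σ).isUnit.map (Int.castRingHom R)
    rw [det_permute', det_one_updateRow, Ne, hsign.mul_right_eq_zero]
    simpa [σ] using hj
  · ext k
    simp [σ]

theorem exists_det_eq_zero_and_det_add_ne_zero {B : Matrix n n R} (hB : B ≠ 0) :
    ∃ X : Matrix n n R, X.det = 0 ∧ (B + X).det ≠ 0 := by
  obtain ⟨i, hi⟩ := Function.ne_iff.mp hB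
  obtain ⟨M, hM, hMi⟩ := exists_det_ne_zero_and_row_eq hi i
  refine ⟨M - B, det_eq_zero_of_row_eq_zero i fun k => by simp [hMi], ?_⟩
  rwa [add_sub_cancel]

end Matrix

theorem translation_preserving_determinantal (n m : ℕ)
    (ρ : (Fin m → Fin n → ℂ) →ₗ[ℂ] Matrix (Fin n) (Fin n) ℂ)
    (hρ : Function.Surjective ρ) (a : Fin m → Fin n → ℂ) :
    (∀ v : Fin m → Fin n → ℂ, (ρ v).det = 0 → (ρ (a + v)).det = 0) ↔ ρ a = 0 := by
  refine ⟨fun h => ?_, fun h v hv => by rwa [map_add, h, zero_add]⟩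
  by_contra ha
  obtain ⟨X, hX, hX_add⟩ := Matrix.exists_det_eq_zero_and_det_add_ne_zero ha
  obtain ⟨v, rfl⟩ := hρ X
  exact hX_add (by simpa only [map_add] using h v hX)
end

section
/- Let ρ_1, ρ_2 : (ℂ^n)^{⊕m} → (ℂ^n)^{⊕n} be two surjective linear maps given by n×m scalar matrices A and B (acting block-wise on the vector variables). Then ρ_1^{-1}(D_n) = ρ_2^{-1}(D_n), where D_n is the variety of singular n×n matrices, if and only if A and B have the same kernel (equivalently B = CA with C ∈ GL_n(ℂ)). -/
/-!
Whether `A * W` is singular only depends on `ker A`: it is singular exactly when `W c ∈ ker A`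
for some `c ≠ 0`. Conversely, if `A x = 0` but `(B x) i ≠ 0`, take a right inverse `U` of `B`
(it exists since `W ↦ B * W` is onto) and replace its `i`-th column by `x`. Then `A * W` has a
zero column, while `B * W` is the identity with its `i`-th column replaced by `B x`, so
`det (B * W) = (B x) i ≠ 0`.
-/

namespace Matrix

variable {R : Type*} [CommRing R] {m n : Type*} [Fintype m] [Fintype n] [DecidableEq n]

/-- `ρ_A⁻¹(D_n)`, a tuple `(v_1, …, v_m)` of vectors being the matrix `W` with rows `v_j`. -/
def singularPreimage (A : Matrix n m R) : Set (Matrix m n R) :=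
  {W | (A * W).det = 0}

lemma mem_singularPreimage_iff_exists_mulVec_mem_ker [IsDomain R] (A : Matrix n m R)
    (W : Matrix m n R) :
    W ∈ A.singularPreimage ↔ ∃ c ≠ 0, W *ᵥ c ∈ LinearMap.ker A.mulVecLin := by
  simp only [singularPreimage, Set.mem_ofPred_eq, ← exists_mulVec_eq_zero_iff, LinearMap.mem_ker,
    mulVecLin_apply, mulVec_mulVec]

lemma singularPreimage_eq_of_ker_eq [IsDomain R] {A B : Matrix n m R}
    (h : LinearMap.ker A.mulVecLin = LinearMap.ker B.mulVecLin) :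
    A.singularPreimage = B.singularPreimage := by
  ext W
  simp only [mem_singularPreimage_iff_exists_mulVec_mem_ker, h]

lemma updateCol_mem_singularPreimage {A : Matrix n m R} {x : m → R} (hx : A *ᵥ x = 0)
    (U : Matrix m n R) (i : n) : U.updateCol i x ∈ A.singularPreimage :=
  det_eq_zero_of_column_eq_zero i fun j => by simp [mul_updateCol, hx]

lemma det_mul_updateCol_of_mul_eq_one {B : Matrix n m R} {U : Matrix m n R} (hU : B * U = 1)
    (i : n) (x : m → R) : (B * U.updateCol i x).det = (B *ᵥ x) i := by
  rw [mul_updateCol, hU, ← cramer_apply, cramer_one, Module.End.one_apply]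

lemma ker_le_ker_of_singularPreimage_subset {A B : Matrix n m R}
    (hB : ∃ U : Matrix m n R, B * U = 1) (h : A.singularPreimage ⊆ B.singularPreimage) :
    LinearMap.ker A.mulVecLin ≤ LinearMap.ker B.mulVecLin := by
  obtain ⟨U, hU⟩ := hB
  intro x hx
  rw [LinearMap.mem_ker, mulVecLin_apply] at hx ⊢
  funext i
  have hW := h (updateCol_mem_singularPreimage hx U i)
  rwa [singularPreimage, Set.mem_ofPred_eq, det_mul_updateCol_of_mul_eq_one hU] at hW

theorem singularPreimage_eq_iff_ker_eq [IsDomain R] {A B : Matrix n m R}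
    (hA : ∃ U : Matrix m n R, A * U = 1)
    (hB : ∃ U : Matrix m n R, B * U = 1) :
    A.singularPreimage = B.singularPreimage ↔
      LinearMap.ker A.mulVecLin = LinearMap.ker B.mulVecLin :=
  ⟨fun h => le_antisymm (ker_le_ker_of_singularPreimage_subset hB h.subset)
    (ker_le_ker_of_singularPreimage_subset hA h.symm.subset), singularPreimage_eq_of_ker_eq⟩

end Matrix

theorem determinantal_varieties_equal_iff_same_kernel (n m : ℕ)
    (A B : Matrix (Fin n) (Fin m) ℂ)
    (hA : Function.Surjective
      (fun v : Fin m → Fin n → ℂ => (Matrix.of fun i j => ∑ l, A i l * v l j :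
        Matrix (Fin n) (Fin n) ℂ)))
    (hB : Function.Surjective
      (fun v : Fin m → Fin n → ℂ => (Matrix.of fun i j => ∑ l, B i l * v l j :
        Matrix (Fin n) (Fin n) ℂ))) :
    ({v : Fin m → Fin n → ℂ | (Matrix.of fun i j => ∑ l, A i l * v l j).det = 0} =
      {v : Fin m → Fin n → ℂ | (Matrix.of fun i j => ∑ l, B i l * v l j).det = 0}) ↔
    LinearMap.ker A.mulVecLin = LinearMap.ker B.mulVecLin := by
  -- `Matrix.of fun i j => ∑ l, C i l * v l j` is `C * v` by definition of the matrix product.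
  exact Matrix.singularPreimage_eq_iff_ker_eq (hA 1) (hB 1)
end

section
/- The polynomial t⁴ + 4t³y + 16t²y² + 24ty³ + 16y⁴ is irreducible in ℚ[t, y], and likewise t⁴ + 2t³y + 4t²y² - 8ty³ - 16y⁴ is irreducible in ℚ[t, y]. -/
/-!
Both forms are monic of degree 4 in `X 0`, so a factorization of either one specializes at
`X 1 = 1` to a factorization of its dehomogenization, a monic integral quartic. By Gauss's lemma
and reduction modulo 3 it suffices that this quartic is irreducible over `𝔽₃`, which is a finite
check: it has no root and is not a product of two monic quadratics.
-/

namespace MvPolynomial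

variable {R : Type*} [CommRing R] {n : ℕ}

theorem map_eval_finSuccEquiv (s : Fin n → R) (F : MvPolynomial (Fin (n + 1)) R) :
    (finSuccEquiv R n F).map (eval s) =
      aeval (Fin.cons Polynomial.X fun i => Polynomial.C (s i)) F := by
  induction F using MvPolynomial.induction_on with
  | C r => rw [← algebraMap_eq, AlgEquiv.commutes]; simp
  | add F G hF hG => simp [hF, hG]
  | mul_X F i ih =>
    cases i using Fin.cases <;> simp [ih, finSuccEquiv_X_zero, finSuccEquiv_X_succ]

end MvPolynomial

namespace Polynomial

section Homogenize

variable {R : Type*} [CommRing R] {p : R[X]}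

theorem Monic.eq_X_sq_add_C_mul_X_add_C (hm : p.Monic) (hp : p.natDegree = 2) :
    p = X ^ 2 + C (p.coeff 1) * X + C (p.coeff 0) := by
  conv_lhs => rw [hm.as_sum, hp]
  simp [Finset.sum_range_succ]
  ring

open MvPolynomial in
theorem Monic.finSuccEquiv_homogenize (hp : p.Monic) :
    (finSuccEquiv R 1 (p.homogenize p.natDegree)).Monic := by
  have cons_one (i : ℕ) (m : Fin 1 →₀ ℕ) : m.cons i 1 = m 0 := Finsupp.cons_succ 0 i m
  apply monic_of_natDegree_le_of_coeff_eq_one p.natDegree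
  · rw [natDegree_le_iff_coeff_eq_zero]
    intro i hi
    ext m
    rw [finSuccEquiv_coeff_coeff, coeff_homogenize, Finsupp.cons_zero, cons_one,
      if_neg (by omega), MvPolynomial.coeff_zero]
  · ext m
    have hm0 : m 0 = 0 ↔ 0 = m := by
      refine ⟨fun h => Finsupp.ext fun j => ?_, fun h => by simp [← h]⟩
      rw [Subsingleton.elim j 0, h, Finsupp.zero_apply]
    rw [finSuccEquiv_coeff_coeff, coeff_homogenize, Finsupp.cons_zero, cons_one,
      MvPolynomial.coeff_one, hp.coeff_natDegree]
    simp only [Nat.add_eq_left, hm0]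

theorem Monic.irreducible_homogenize [IsDomain R] (hm : p.Monic) (hp : Irreducible p) :
    Irreducible (p.homogenize p.natDegree) := by
  rw [← MulEquiv.irreducible_iff (MvPolynomial.finSuccEquiv R 1)]
  refine hm.finSuccEquiv_homogenize.irreducible_of_irreducible_map (MvPolynomial.eval 1) _ ?_
  have hpoint : (Fin.cons X fun _ => C 1 : Fin 2 → R[X]) = ![X, 1] := by
    ext i : 1
    fin_cases i <;> rfl
  rwa [MvPolynomial.map_eval_finSuccEquiv, Pi.one_def, hpoint, aeval_homogenize_X_one p le_rfl]

theorem Monic.irreducible_homogenize_of_irreducible_map {K S : Type*} [IsDomain R]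
    [IsIntegrallyClosed R] [Field K] [Algebra R K] [IsFractionRing R K] [CommRing S] [IsDomain S]
    (φ : R →+* S) (hp : p.Monic) (h : Irreducible (p.map φ)) :
    Irreducible ((p.map (algebraMap R K)).homogenize p.natDegree) := by
  have hK := (hp.irreducible_iff_irreducible_map_fraction_map (K := K)).1
    (hp.irreducible_of_irreducible_map φ p h)
  simpa [hp.natDegree_map] using (hp.map _).irreducible_homogenize hK

end Homogenize

section Quartic

variable {R S : Type*} [CommRing R] [CommRing S]

noncomputable def monicQuartic (a b c d : R) : R[X] :=
  X ^ 4 + C a * X ^ 3 + C b * X ^ 2 + C c * X + C d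

variable (a b c d : R)

theorem monic_monicQuartic [Nontrivial R] : (monicQuartic a b c d).Monic := by
  unfold monicQuartic
  monicity!

theorem natDegree_monicQuartic [Nontrivial R] : (monicQuartic a b c d).natDegree = 4 := by
  unfold monicQuartic
  compute_degree!

theorem eval_monicQuartic (x : R) :
    (monicQuartic a b c d).eval x = x ^ 4 + a * x ^ 3 + b * x ^ 2 + c * x + d := by
  simp [monicQuartic]

theorem map_monicQuartic (f : R →+* S) :
    (monicQuartic a b c d).map f = monicQuartic (f a) (f b) (f c) (f d) := by
  simp [monicQuartic]

theorem monicQuartic_inj {a' b' c' d' : R} :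
    monicQuartic a b c d = monicQuartic a' b' c' d' ↔ a = a' ∧ b = b' ∧ c = c' ∧ d = d' := by
  refine ⟨fun h => ?_, by rintro ⟨rfl, rfl, rfl, rfl⟩; rfl⟩
  have hcoeff (n : ℕ) := congrArg (coeff · n) h
  simp only [monicQuartic, coeff_add, coeff_X_pow, coeff_C_mul, coeff_X, coeff_C] at hcoeff
  exact ⟨by simpa using hcoeff 3, by simpa using hcoeff 2, by simpa using hcoeff 1,
    by simpa using hcoeff 0⟩

theorem quadratic_mul_quadratic (p q r s : R) :
    (X ^ 2 + C p * X + C q) * (X ^ 2 + C r * X + C s) =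
      monicQuartic (p + r) (q + p * r + s) (p * s + q * r) (q * s) := by
  simp only [monicQuartic, C_add, C_mul]
  ring

theorem homogenize_monicQuartic :
    (monicQuartic a b c d).homogenize 4 =
      .X 0 ^ 4 + .C a * .X 0 ^ 3 * .X 1 + .C b * .X 0 ^ 2 * .X 1 ^ 2 + .C c * .X 0 * .X 1 ^ 3
        + .C d * .X 1 ^ 4 := by
  simp [monicQuartic, mul_assoc]

variable {a b c d}

theorem irreducible_monicQuartic [IsDomain R]
    (hroot : ∀ x : R, x ^ 4 + a * x ^ 3 + b * x ^ 2 + c * x + d ≠ 0)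
    (hquad : ∀ p q r s : R, p + r = a → q + p * r + s = b → p * s + q * r = c → q * s ≠ d) :
    Irreducible (monicQuartic a b c d) := by
  rw [(monic_monicQuartic a b c d).irreducible_iff_natDegree', natDegree_monicQuartic]
  refine ⟨ne_of_apply_ne natDegree (by simp [natDegree_monicQuartic]), ?_⟩
  intro f g hf hg hfg hdeg
  have hsum : f.natDegree + g.natDegree = 4 := by
    rw [← hf.natDegree_mul hg, hfg, natDegree_monicQuartic]
  rw [Finset.mem_Ioc] at hdeg
  obtain hg1 | hg2 : g.natDegree = 1 ∨ g.natDegree = 2 := by omega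
  · apply hroot (-g.coeff 0)
    rw [← eval_monicQuartic, ← hfg, hg.eq_X_add_C hg1]
    simp
  · rw [hf.eq_X_sq_add_C_mul_X_add_C (by omega), hg.eq_X_sq_add_C_mul_X_add_C hg2,
      quadratic_mul_quadratic, monicQuartic_inj] at hfg
    exact hquad _ _ _ _ hfg.1 hfg.2.1 hfg.2.2.1 hfg.2.2.2

end Quartic

theorem irreducible_homogenize_monicQuartic_of_irreducible_zmod {n : ℕ} [Fact n.Prime]
    {a b c d : ℤ} (h : Irreducible (monicQuartic (a : ZMod n) b c d)) :
    Irreducible ((monicQuartic (a : ℚ) b c d).homogenize 4) := by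
  simpa [map_monicQuartic, natDegree_monicQuartic] using
    (monic_monicQuartic a b c d).irreducible_homogenize_of_irreducible_map (K := ℚ)
      (Int.castRingHom (ZMod n)) (by rwa [map_monicQuartic])

end Polynomial

open MvPolynomial

theorem type_j_and_g_quartics_irreducible :
    Irreducible ((X 0) ^ 4 + 4 * (X 0) ^ 3 * X 1 + 16 * (X 0) ^ 2 * (X 1) ^ 2
        + 24 * X 0 * (X 1) ^ 3 + 16 * (X 1) ^ 4 :
      MvPolynomial (Fin 2) ℚ) ∧
    Irreducible ((X 0) ^ 4 + 2 * (X 0) ^ 3 * X 1 + 4 * (X 0) ^ 2 * (X 1) ^ 2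
        - 8 * X 0 * (X 1) ^ 3 - 16 * (X 1) ^ 4 :
      MvPolynomial (Fin 2) ℚ) := by
  have hj := Polynomial.irreducible_homogenize_monicQuartic_of_irreducible_zmod (n := 3)
    (a := 4) (b := 16) (c := 24) (d := 16)
    (Polynomial.irreducible_monicQuartic (by decide) (by decide))
  have hg := Polynomial.irreducible_homogenize_monicQuartic_of_irreducible_zmod (n := 3)
    (a := 2) (b := 4) (c := -8) (d := -16)
    (Polynomial.irreducible_monicQuartic (by decide) (by decide))
  simp only [Polynomial.homogenize_monicQuartic, Int.cast_ofNat, Int.cast_neg, map_neg, map_ofNat,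
    neg_mul, ← sub_eq_add_neg] at hj hg
  exact ⟨hj, hg⟩
end

section
/- The polynomial ξ_1²ξ_2² + ξ_1²ξ_2ξ_3 + ξ_1ξ_2²ξ_3 - ξ_1²ξ_3² - ξ_1ξ_2ξ_3² - ξ_2²ξ_3² is irreducible in ℚ[ξ_1, ξ_2, ξ_3]. -/
/-! Viewed as a polynomial in `ξ₁` over `ℚ[ξ₂, ξ₃]`, the quartic is the quadratic
`A ξ₁² + B ξ₁ + C` with `A = ξ₂² + ξ₂ξ₃ - ξ₃²`, `B = ξ₂ξ₃(ξ₂ - ξ₃)` and `C = -ξ₂²ξ₃²`.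
Neither `ξ₂` nor `ξ₃` divides `A`, so `A` and `C` are coprime and the quadratic is primitive.
A primitive quadratic over a domain can then only split into two linear factors, and that would
make its discriminant `B² - 4AC = ξ₂²ξ₃²(5ξ₂ - 3ξ₃)(ξ₂ + ξ₃)` a square; it is not, being `-12`
at `(1, 2)`. -/

open MvPolynomial

namespace Polynomial

variable {R : Type*}

theorem IsPrimitive.isUnit_of_dvd_of_natDegree_eq_zero [CommSemiring R] {p f : R[X]}
    (hp : p.IsPrimitive) (hf : f ∣ p) (h0 : f.natDegree = 0) : IsUnit f := by
  rw [eq_C_of_natDegree_eq_zero h0] at hf ⊢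
  exact isUnit_C.mpr (hp _ hf)

theorem isPrimitive_quadratic_of_isRelPrime [CommSemiring R] {a b c : R} (h : IsRelPrime a c) :
    (C a * X ^ 2 + C b * X + C c).IsPrimitive := by
  intro r hr
  rw [C_dvd_iff_dvd_coeff] at hr
  exact h (by simpa using hr 2) (by simpa using hr 0)

theorem discrim_eq_sq_of_quadratic_eq_mul [CommRing R] {a b c a₁ b₁ a₂ b₂ : R}
    (h : C a * X ^ 2 + C b * X + C c = (C a₁ * X + C b₁) * (C a₂ * X + C b₂)) :
    discrim a b c = (a₁ * b₂ - a₂ * b₁) ^ 2 := by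
  have h' : C a * X ^ 2 + C b * X + C c
      = C (a₁ * a₂) * X ^ 2 + C (a₁ * b₂ + a₂ * b₁) * X + C (b₁ * b₂) := by
    rw [h]; simp only [map_mul, map_add]; ring
  have ha := congrArg (coeff · 2) h'
  have hb := congrArg (coeff · 1) h'
  have hc := congrArg (coeff · 0) h'
  simp only [coeff_add, coeff_C_mul_X_pow, coeff_C_mul_X, coeff_C] at ha hb hc
  norm_num at ha hb hc
  rw [discrim, ha, hb, hc]
  ring

theorem irreducible_quadratic_of_isPrimitive_of_discrim_ne_sq [CommRing R] [IsDomain R]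
    {a b c : R} (hp : (C a * X ^ 2 + C b * X + C c).IsPrimitive)
    (hd : ∀ s : R, discrim a b c ≠ s ^ 2) : Irreducible (C a * X ^ 2 + C b * X + C c) := by
  have ha : a ≠ 0 := by
    rintro rfl
    exact hd b (by simp [discrim])
  have hq2 := natDegree_quadratic (b := b) (c := c) ha
  refine ⟨fun hu => by simpa [hq2] using natDegree_eq_zero_of_isUnit hu, fun f g hfg => ?_⟩
  have hf0 : f ≠ 0 := by rintro rfl; exact hp.ne_zero (by simpa using hfg)
  have hg0 : g ≠ 0 := by rintro rfl; exact hp.ne_zero (by simpa using hfg)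
  have hdeg : f.natDegree + g.natDegree = 2 := by rw [← natDegree_mul hf0 hg0, ← hfg, hq2]
  by_cases hf : f.natDegree = 0
  · exact .inl (hp.isUnit_of_dvd_of_natDegree_eq_zero (hfg ▸ dvd_mul_right f g) hf)
  by_cases hg : g.natDegree = 0
  · exact .inr (hp.isUnit_of_dvd_of_natDegree_eq_zero (hfg ▸ dvd_mul_left g f) hg)
  rw [eq_X_add_C_of_natDegree_le_one (by omega : f.natDegree ≤ 1),
    eq_X_add_C_of_natDegree_le_one (by omega : g.natDegree ≤ 1)] at hfg
  exact absurd (discrim_eq_sq_of_quadratic_eq_mul hfg) (hd _)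

end Polynomial

namespace StarTypeBI

theorem isRelPrime_outer_coeffs :
    IsRelPrime (X 0 ^ 2 + X 0 * X 1 - X 1 ^ 2 : MvPolynomial (Fin 2) ℚ) (-(X 0 ^ 2 * X 1 ^ 2)) := by
  have h0 : IsRelPrime (X 0 ^ 2 + X 0 * X 1 - X 1 ^ 2 : MvPolynomial (Fin 2) ℚ) (X 0) := by
    refine (X_prime.irreducible.isRelPrime_iff_not_dvd.mpr ?_).symm
    rintro ⟨t, ht⟩
    simpa using congrArg (eval ![0, 1]) ht
  have h1 : IsRelPrime (X 0 ^ 2 + X 0 * X 1 - X 1 ^ 2 : MvPolynomial (Fin 2) ℚ) (X 1) := by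
    refine (X_prime.irreducible.isRelPrime_iff_not_dvd.mpr ?_).symm
    rintro ⟨t, ht⟩
    simpa using congrArg (eval ![1, 0]) ht
  exact (h0.pow_right.mul_right h1.pow_right).neg_right

theorem discrim_ne_sq :
    ∀ s : MvPolynomial (Fin 2) ℚ, discrim (X 0 ^ 2 + X 0 * X 1 - X 1 ^ 2)
      (X 0 ^ 2 * X 1 - X 0 * X 1 ^ 2) (-(X 0 ^ 2 * X 1 ^ 2)) ≠ s ^ 2 := by
  intro s hs
  have h := congrArg (eval ![1, 2]) hs
  simp only [discrim, mul_neg, sub_neg_eq_add, map_add, map_pow, map_sub, map_mul, eval_X,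
    Matrix.cons_val_zero, Matrix.cons_val_one, Matrix.cons_val_fin_one, one_pow, one_mul,
    eval_ofNat] at h
  nlinarith [sq_nonneg (eval ![1, 2] s)]

end StarTypeBI

theorem star_type_BI_determinant_irreducible :
    Irreducible ((X 0) ^ 2 * (X 1) ^ 2 + (X 0) ^ 2 * X 1 * X 2
        + X 0 * (X 1) ^ 2 * X 2 - (X 0) ^ 2 * (X 2) ^ 2
        - X 0 * X 1 * (X 2) ^ 2 - (X 1) ^ 2 * (X 2) ^ 2 :
      MvPolynomial (Fin 3) ℚ) := by
  refine (MulEquiv.irreducible_iff (finSuccEquiv ℚ 2).toMulEquiv).mp ?_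
  have hq : finSuccEquiv ℚ 2 ((X 0) ^ 2 * (X 1) ^ 2 + (X 0) ^ 2 * X 1 * X 2
        + X 0 * (X 1) ^ 2 * X 2 - (X 0) ^ 2 * (X 2) ^ 2
        - X 0 * X 1 * (X 2) ^ 2 - (X 1) ^ 2 * (X 2) ^ 2) =
      Polynomial.C (X 0 ^ 2 + X 0 * X 1 - X 1 ^ 2) * Polynomial.X ^ 2
        + Polynomial.C (X 0 ^ 2 * X 1 - X 0 * X 1 ^ 2) * Polynomial.X
        + Polynomial.C (-(X 0 ^ 2 * X 1 ^ 2)) := by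
    simp only [map_add, map_sub, map_mul, map_pow, map_neg, finSuccEquiv_X_zero]
    rw [show (X 1 : MvPolynomial (Fin 3) ℚ) = X (Fin.succ 0) from rfl,
      show (X 2 : MvPolynomial (Fin 3) ℚ) = X (Fin.succ 1) from rfl,
      finSuccEquiv_X_succ, finSuccEquiv_X_succ]
    ring
  change Irreducible (finSuccEquiv ℚ 2 _)
  rw [hq]
  exact Polynomial.irreducible_quadratic_of_isPrimitive_of_discrim_ne_sq
    (Polynomial.isPrimitive_quadratic_of_isRelPrime StarTypeBI.isRelPrime_outer_coeffs)
    StarTypeBI.discrim_ne_sq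
end

section
/- Let f(x_1, …, x_p) be a nonzero polynomial with integer coefficients, all of absolute value less than C, and all exponents less than D, where C, D ≥ 2 are integers. Define a_i = C^{D^i} for i = 1, 2, 3, …. Then for every choice of p distinct indices i_1, …, i_p one has f(a_{i_1}, …, a_{i_p}) ≠ 0. -/
lemma digits_zero (C : ℤ) (hC : 2 ≤ C) :
    ∀ (N : ℕ) (g : ℕ → ℤ), (∀ n, |g n| < C) →
    (∑ n ∈ Finset.range N, g n * C ^ n) = 0 → ∀ n < N, g n = 0 := by
  intro N
  induction N with
  | zero => intro g _ _ n hn; omega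
  | succ N ih =>
    intro g hg hsum n hn
    have h0 : ∑ n ∈ Finset.range (N+1), g n * C ^ n
        = C * (∑ n ∈ Finset.range N, g (n+1) * C ^ n) + g 0 := by
      rw [Finset.sum_range_succ', Finset.mul_sum]
      simp only [pow_succ, pow_zero, mul_one]
      congr 1
      exact Finset.sum_congr rfl fun i _ => by ring
    rw [h0] at hsum
    have hdvd : C ∣ g 0 := ⟨-(∑ n ∈ Finset.range N, g (n+1) * C ^ n), by linarith⟩
    have hg0 : g 0 = 0 := Int.eq_zero_of_abs_lt_dvd hdvd (hg 0)
    have hk : (∑ n ∈ Finset.range N, g (n+1) * C ^ n) = 0 := by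
      have hCne : C ≠ 0 := by omega
      have : C * (∑ n ∈ Finset.range N, g (n+1) * C ^ n) = 0 := by omega
      exact (mul_eq_zero.mp this).resolve_left hCne
    match n with
    | 0 => exact hg0
    | m + 1 => exact ih (fun n => g (n+1)) (fun n => hg (n+1)) hk m (by omega)

theorem generic_tower_evaluation_nonzero (p C D : ℕ) (hC : 2 ≤ C) (hD : 2 ≤ D)
    (f : MvPolynomial (Fin p) ℤ) (hf : f ≠ 0)
    (hcoeff : ∀ s, |f.coeff s| < (C : ℤ))
    (hexp : ∀ s ∈ f.support, ∀ j, s j < D)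
    (idx : Fin p → ℕ) (hinj : Function.Injective idx) (hpos : ∀ j, 1 ≤ idx j) :
    MvPolynomial.eval (fun j => (C : ℤ) ^ (D ^ (idx j))) f ≠ 0 := by
  classical
  set e : (Fin p →₀ ℕ) → ℕ := fun s => ∑ j, s j * D ^ (idx j) with he
  -- evaluation formula
  have heval : MvPolynomial.eval (fun j => (C : ℤ) ^ (D ^ (idx j))) f
      = ∑ s ∈ f.support, f.coeff s * (C : ℤ) ^ (e s) := by
    rw [MvPolynomial.eval_eq']
    refine Finset.sum_congr rfl fun s hs => ?_
    congr 1
    calc ∏ j, ((C : ℤ) ^ (D ^ (idx j))) ^ (s j)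
        = ∏ j, (C : ℤ) ^ (s j * D ^ (idx j)) :=
          Finset.prod_congr rfl fun j _ => by rw [← pow_mul, mul_comm]
      _ = (C : ℤ) ^ (∑ j, s j * D ^ (idx j)) := Finset.prod_pow_eq_pow_sum _ _ _
  -- injectivity of e on the support
  have einj : ∀ s ∈ f.support, ∀ t ∈ f.support, e s = e t → s = t := by
    intro s hs t ht hst
    set M := (Finset.univ.sup idx) + 1 with hM
    have hidxM : ∀ j, idx j < M := fun j =>
      Nat.lt_succ_of_le (Finset.le_sup (Finset.mem_univ j))
    have hrep : ∀ u : Fin p →₀ ℕ, ((e u : ℤ)) = ∑ n ∈ Finset.range M,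
        (∑ j ∈ Finset.univ.filter (fun j => idx j = n), (u j : ℤ)) * (D : ℤ) ^ n := by
      intro u
      have h1 : ((e u : ℤ)) = ∑ j, (u j : ℤ) * (D : ℤ) ^ (idx j) := by
        simp only [he]; push_cast; rfl
      rw [h1]
      calc ∑ j, (u j : ℤ) * (D : ℤ) ^ (idx j)
          = ∑ n ∈ Finset.range M, ∑ j ∈ Finset.univ.filter (fun j => idx j = n),
              (u j : ℤ) * (D : ℤ) ^ (idx j) :=
            (Finset.sum_fiberwise_of_maps_to (fun j _ => Finset.mem_range.mpr (hidxM j)) _).symm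
        _ = ∑ n ∈ Finset.range M,
              (∑ j ∈ Finset.univ.filter (fun j => idx j = n), (u j : ℤ)) * (D : ℤ) ^ n := by
            refine Finset.sum_congr rfl fun n _ => ?_
            rw [Finset.sum_mul]
            refine Finset.sum_congr rfl fun j hj => ?_
            rw [(Finset.mem_filter.mp hj).2]
    set ds : ℕ → ℤ := fun n => ∑ j ∈ Finset.univ.filter (fun j => idx j = n), ((s j : ℤ))
    set dt : ℕ → ℤ := fun n => ∑ j ∈ Finset.univ.filter (fun j => idx j = n), ((t j : ℤ))
    have hcard : ∀ n, (Finset.univ.filter (fun j => idx j = n)).card ≤ 1 := fun n =>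
      Finset.card_le_one.mpr fun a ha b hb =>
        hinj ((Finset.mem_filter.mp ha).2.trans (Finset.mem_filter.mp hb).2.symm)
    have hbound : ∀ n, |ds n - dt n| < (D : ℤ) := by
      intro n
      rcases (Finset.univ.filter (fun j => idx j = n)).eq_empty_or_nonempty with hemp | ⟨a, ha⟩
      · simp [ds, dt, hemp]; omega
      · have hsing : Finset.univ.filter (fun j => idx j = n) = {a} :=
          Finset.eq_singleton_iff_unique_mem.mpr
            ⟨ha, fun b hb => hinj ((Finset.mem_filter.mp hb).2.trans
              (Finset.mem_filter.mp ha).2.symm)⟩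
        have h1 : ds n = (s a : ℤ) := by simp [ds, hsing]
        have h2 : dt n = (t a : ℤ) := by simp [dt, hsing]
        have hsa := hexp s hs a
        have hta := hexp t ht a
        rw [h1, h2, abs_lt]
        constructor <;> omega
    have hsum0 : ∑ n ∈ Finset.range M, (ds n - dt n) * (D : ℤ) ^ n = 0 := by
      have : (∑ n ∈ Finset.range M, ds n * (D : ℤ) ^ n)
           - (∑ n ∈ Finset.range M, dt n * (D : ℤ) ^ n) = 0 := by
        rw [← hrep s, ← hrep t, hst]; ring
      rw [← this, ← Finset.sum_sub_distrib]
      exact Finset.sum_congr rfl fun n _ => by ring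
    have hz := digits_zero (D : ℤ) (by exact_mod_cast hD) M _ hbound hsum0
    ext j
    have hsingle : Finset.univ.filter (fun j' => idx j' = idx j) = {j} :=
      Finset.eq_singleton_iff_unique_mem.mpr
        ⟨Finset.mem_filter.mpr ⟨Finset.mem_univ j, rfl⟩,
         fun b hb => hinj (Finset.mem_filter.mp hb).2⟩
    have := hz (idx j) (hidxM j)
    have h1 : ds (idx j) = (s j : ℤ) := by simp [ds, hsingle]
    have h2 : dt (idx j) = (t j : ℤ) := by simp [dt, hsingle]
    rw [h1, h2] at this
    exact_mod_cast sub_eq_zero.mp this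
  -- main argument
  intro h0
  obtain ⟨s0, hs0⟩ := MvPolynomial.support_nonempty.mpr hf
  set N := (f.support.sup e) + 1 with hN
  have heN : ∀ s ∈ f.support, e s < N := fun s hs => Nat.lt_succ_of_le (Finset.le_sup hs)
  set g : ℕ → ℤ := fun n => ∑ s ∈ f.support.filter (fun s => e s = n), f.coeff s with hgdef
  have hsum : ∑ n ∈ Finset.range N, g n * (C : ℤ) ^ n = 0 := by
    calc ∑ n ∈ Finset.range N, g n * (C : ℤ) ^ n
        = ∑ n ∈ Finset.range N, ∑ s ∈ f.support.filter (fun s => e s = n),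
            f.coeff s * (C : ℤ) ^ (e s) := by
          refine Finset.sum_congr rfl fun n _ => ?_
          rw [hgdef, Finset.sum_mul]
          exact Finset.sum_congr rfl fun s hs => by rw [(Finset.mem_filter.mp hs).2]
      _ = ∑ s ∈ f.support, f.coeff s * (C : ℤ) ^ (e s) :=
          Finset.sum_fiberwise_of_maps_to (fun s hs => Finset.mem_range.mpr (heN s hs)) _
      _ = 0 := by rw [← heval]; exact h0
  have hbound : ∀ n, |g n| < (C : ℤ) := by
    intro n
    have hcard : (f.support.filter (fun s => e s = n)).card ≤ 1 :=
      Finset.card_le_one.mpr fun a ha b hb =>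
        einj a (Finset.mem_filter.mp ha).1 b (Finset.mem_filter.mp hb).1
          ((Finset.mem_filter.mp ha).2.trans (Finset.mem_filter.mp hb).2.symm)
    obtain ⟨a, hsub⟩ := Finset.card_le_one_iff_subset_singleton.mp hcard
    rcases Finset.subset_singleton_iff.mp hsub with hemp | hsing
    · simp [hgdef, hemp]; omega
    · have : g n = f.coeff a := by simp [hgdef, hsing]
      rw [this]; exact hcoeff a
  have hz := digits_zero (C : ℤ) (by exact_mod_cast hC) N g hbound hsum (e s0) (heN s0 hs0)
  have hsingle : f.support.filter (fun s => e s = e s0) = {s0} :=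
    Finset.eq_singleton_iff_unique_mem.mpr
      ⟨Finset.mem_filter.mpr ⟨hs0, rfl⟩,
       fun b hb => einj b (Finset.mem_filter.mp hb).1 s0 hs0 (Finset.mem_filter.mp hb).2⟩
  have : g (e s0) = f.coeff s0 := by simp [hgdef, hsingle]
  rw [this] at hz
  exact (MvPolynomial.mem_support_iff.mp hs0) hz
end

section
/- Let d, f_1, …, f_n ∈ ℝ[v_1, …, v_N] with d irreducible, and suppose d divides f_1² + ⋯ + f_n² in ℝ[v_1, …, v_N]. If the real zero set of d is Zariski dense in the complex zero set of d, then d divides each f_i. -/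
/-!
At a real zero of `d` the real numbers `f_i(x)` have vanishing sum of squares, so each `f_i`
vanishes on the real zeros of `d`, hence by density on its complex zeros. Hilbert's
Nullstellensatz over `ℂ` then gives `d ∣ f_i ^ k` over `ℂ`; taking real parts of the
coefficients of the quotient brings this down to `ℝ`, and `d` is prime.
-/

open MvPolynomial

namespace MvPolynomial

variable {σ : Type*}

theorem eval_eq_zero_of_dvd_sum_sq {R ι : Type*} [CommRing R] [LinearOrder R]
    [IsStrictOrderedRing R] [Fintype ι] {d : MvPolynomial σ R} {f : ι → MvPolynomial σ R}
    (hdvd : d ∣ ∑ i, f i ^ 2) {x : σ → R} (hx : eval x d = 0) (i : ι) : eval x (f i) = 0 := by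
  obtain ⟨c, hc⟩ := hdvd
  have hsum : ∑ j, eval x (f j) * eval x (f j) = 0 := by
    simpa [hx, sq] using congrArg (eval x) hc
  exact (Finset.sum_mul_self_eq_zero_iff _ _).mp hsum i (Finset.mem_univ i)

theorem exists_dvd_pow_of_forall_eval_eq_zero {k : Type*} [Field k] [IsAlgClosed k] [Finite σ]
    {p g : MvPolynomial σ k} (h : ∀ z, eval z p = 0 → eval z g = 0) : ∃ n, p ∣ g ^ n := by
  have hg : g ∈ vanishingIdeal k (zeroLocus k (Ideal.span {p})) :=
    mem_vanishingIdeal_iff.mpr fun z hz => h z (hz p (Ideal.subset_span rfl))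
  rw [vanishingIdeal_zeroLocus_eq_radical] at hg
  obtain ⟨n, hn⟩ := hg
  exact ⟨n, Ideal.mem_span_singleton.mp hn⟩

theorem dvd_of_map_dvd_map {R A : Type*} [CommSemiring R] [CommSemiring A] [Algebra R A]
    (φ : A →ₗ[R] R) (hφ : ∀ r, φ (algebraMap R A r) = r) {p q : MvPolynomial σ R}
    (h : map (algebraMap R A) p ∣ map (algebraMap R A) q) : p ∣ q := by
  classical
  obtain ⟨Q, hQ⟩ := h
  refine ⟨AddMonoidAlgebra.map φ.toAddMonoidHom Q, ?_⟩
  ext m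
  calc q.coeff m = φ ((map (algebraMap R A) q).coeff m) := by rw [coeff_map, hφ]
    _ = _ := by
      rw [hQ, coeff_mul, coeff_mul, map_sum]
      refine Finset.sum_congr rfl fun x _ => ?_
      rw [coeff_map, coeff_addMonoidAlgebraMap, ← Algebra.smul_def, φ.map_smul, smul_eq_mul]
      rfl

end MvPolynomial

theorem irreducible_divides_sum_of_squares (N n : ℕ)
    (d : MvPolynomial (Fin N) ℝ) (f : Fin n → MvPolynomial (Fin N) ℝ)
    (hd : Irreducible d)
    (hdvd : d ∣ ∑ i, (f i) ^ 2)
    (hdense : ∀ g : MvPolynomial (Fin N) ℝ,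
      (∀ x : Fin N → ℝ, MvPolynomial.eval x d = 0 → MvPolynomial.eval x g = 0) →
      ∀ z : Fin N → ℂ,
        MvPolynomial.eval z (MvPolynomial.map (algebraMap ℝ ℂ) d) = 0 →
        MvPolynomial.eval z (MvPolynomial.map (algebraMap ℝ ℂ) g) = 0) :
    ∀ i, d ∣ f i := by
  intro i
  have hcomplex := hdense (f i) fun x hx => eval_eq_zero_of_dvd_sum_sq hdvd hx i
  obtain ⟨k, hk⟩ := exists_dvd_pow_of_forall_eval_eq_zero hcomplex
  rw [← map_pow] at hk
  exact hd.prime.dvd_of_dvd_pow (dvd_of_map_dvd_map Complex.reLm Complex.ofReal_re hk)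
end

section
/- Suppose x = Σ_{a=1}^m c_a v_a (with scalars c_a) satisfies, for some fixed indices i ≠ j, either the linear equation (x, v_j - v_i) = (v_i, v_j - v_i) identically in the vectors v_1, …, v_m ∈ ℝ^n, or the quadratic equation (x - v_i, x - v_j) = 0 identically in v_1, …, v_m. Then in the linear case x = v_i (i.e., c_i = 1 and all other c_a = 0), and in the quadratic case x = v_i or x = v_j. -/
open scoped InnerProductSpace

theorem prod_zero_aux {α : Type*} [AddCommGroup α] (f g : α → ℝ)
    (hf : ∀ s t, f (s + t) = f s + f t) (hg : ∀ s t, g (s + t) = g s + g t)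
    (h : ∀ t, f t * g t = 0) : (∀ t, f t = 0) ∨ (∀ t, g t = 0) := by
  have hf' : ∀ s t, f (s - t) = f s - f t := by
    intro s t
    have := hf (s - t) t
    rw [sub_add_cancel] at this; linarith
  have hg' : ∀ s t, g (s - t) = g s - g t := by
    intro s t
    have := hg (s - t) t
    rw [sub_add_cancel] at this; linarith
  by_contra hc
  push_neg at hc
  obtain ⟨⟨t1, h1⟩, ⟨t2, h2⟩⟩ := hc
  have hg1 : g t1 = 0 := by
    rcases mul_eq_zero.1 (h t1) with h' | h'
    · exact absurd h' h1
    · exact h'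
  have hA := h (t1 + t2)
  have hB := h (t1 - t2)
  rw [hf t1 t2, hg t1 t2, hg1] at hA
  rw [hf' t1 t2, hg' t1 t2, hg1] at hB
  rcases mul_eq_zero.1 hA with h' | h'
  · rcases mul_eq_zero.1 hB with h'' | h''
    · exact h1 (by linarith)
    · exact h2 (by linarith)
  · exact h2 (by linarith)

theorem special_component_realization (n m : ℕ) (hn : 2 ≤ n)
    (c : Fin m → ℝ) (i j : Fin m) (hij : i ≠ j) :
    ((∀ v : Fin m → EuclideanSpace ℝ (Fin n),
        ⟪∑ a, c a • v a, v j - v i⟫_ℝ = ⟪v i, v j - v i⟫_ℝ) →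
      c = Pi.single i 1) ∧
    ((∀ v : Fin m → EuclideanSpace ℝ (Fin n),
        ⟪(∑ a, c a • v a) - v i, (∑ a, c a • v a) - v j⟫_ℝ = 0) →
      c = Pi.single i 1 ∨ c = Pi.single j 1) := by
  have hn1 : 0 < n := by omega
  set e : EuclideanSpace ℝ (Fin n) := EuclideanSpace.single ⟨0, hn1⟩ 1 with he
  have hee : ⟪e, e⟫_ℝ = 1 := by
    simp [he, EuclideanSpace.inner_single_left]
  set S : (Fin m → ℝ) → ℝ := fun t => ∑ a, c a * t a with hS
  have hSadd : ∀ s t : Fin m → ℝ, S (s + t) = S s + S t := by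
    intro s t
    simp only [hS, Pi.add_apply, mul_add]
    rw [Finset.sum_add_distrib]
  have hsum : ∀ t : Fin m → ℝ, (∑ a, c a • (t a • e)) = S t • e := by
    intro t
    simp only [smul_smul, hS]
    rw [Finset.sum_smul]
  have hSsingle : ∀ k : Fin m, S (Pi.single k 1) = c k := by
    intro k
    simp only [hS, Pi.single_apply, mul_ite, mul_one, mul_zero]
    simp [Finset.sum_ite_eq']
  -- conclusion from S t = t i for all t
  have hconc : ∀ k : Fin m, (∀ t : Fin m → ℝ, S t - t k = 0) → c = Pi.single k 1 := by
    intro k hk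
    funext a
    have := hk (Pi.single a 1)
    rw [hSsingle a] at this
    have h2 : c a = (Pi.single a 1 : Fin m → ℝ) k := by linarith
    rw [h2]
    simp [Pi.single_apply, eq_comm]
  constructor
  · intro h
    have key : ∀ t : Fin m → ℝ, (S t - t i) * (t j - t i) = 0 := by
      intro t
      have := h (fun a => t a • e)
      rw [hsum t, ← sub_smul, real_inner_smul_left, real_inner_smul_left,
        real_inner_smul_right, hee] at this
      nlinarith [this]
    have := prod_zero_aux (fun t => S t - t i) (fun t => t j - t i)
      (by intro s t; simp [hSadd]; ring) (by intro s t; simp; ring) key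
    rcases this with h1 | h2
    · exact hconc i h1
    · exfalso
      have := h2 (Pi.single j 1)
      simp [Pi.single_apply, hij.symm] at this
  · intro h
    have key : ∀ t : Fin m → ℝ, (S t - t i) * (S t - t j) = 0 := by
      intro t
      have := h (fun a => t a • e)
      rw [hsum t, ← sub_smul, ← sub_smul, real_inner_smul_left,
        real_inner_smul_right, hee] at this
      nlinarith [this]
    have := prod_zero_aux (fun t => S t - t i) (fun t => S t - t j)
      (by intro s t; simp [hSadd]; ring) (by intro s t; simp [hSadd]; ring) key
    rcases this with h1 | h2
    · exact Or.inl (hconc i h1)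
    · exact Or.inr (hconc j h2)
end
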